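/- Fix ŷ ∈ ℂⁿ with ‖ŷ‖ = 1, let stab(ŷ) := {ξ ∈ 𝔨 : ξŷ = 0}, let P : 𝔨 → 𝔨 be the orthogonal projection onto the orthogonal complement of stab(ŷ) in 𝔨, and let Q := id − P. Then there exist an open neighbourhood U of ŷ in ℂⁿ and constants c, c′, c″ > 0 (depending only on ŷ and U) such that for every ξ ∈ 𝔨 and every x ∈ ℂⁿ ∖ {0} with x/‖x‖ ∈ U: (i) ‖ξx‖ ≥ c·‖x‖·‖Pξ‖, (ii) ‖ξx‖ ≥ c′·‖(Pξ)x‖, and (iii) ‖ξx‖ ≥ c″·(‖(Pξ)x‖ + ‖(Qξ)x‖). -/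

import Mathlib

/-
Write ξ = w + s with w = Pξ and s = Qξ. As s and w are commuting skew-Hermitian matrices, ker s
reduces w + s, so ‖ξx‖ ≥ ‖w(πx)‖ with π the orthogonal projection onto ker s. Since ŷ ∈ ker s,
πx stays within ‖x‖ε of ‖x‖ŷ when x/‖x‖ is ε-close to ŷ. On the finite-dimensional space
𝔨 ∩ stab(ŷ)ᗮ, where w lives, w ↦ wŷ is injective, so ‖wŷ‖ ≥ ‖w‖/C. Hence ‖ξx‖ ≥ ‖x‖‖w‖/(2C) for
ε = 1/(2C); (ii) follows from ‖wx‖ ≤ ‖w‖‖x‖ (Frobenius norm), and (iii) from (ii) and the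
triangle inequality for Qξ x = ξx - wx.
-/

open scoped Matrix

noncomputable section

/-- Matrix-vector multiplication, viewed as a map on Euclidean space
(the fundamental vector field of a linear action). -/
def mulVecE {n : ℕ} (ξ : Matrix (Fin n) (Fin n) ℂ) (x : EuclideanSpace ℂ (Fin n)) :
    EuclideanSpace ℂ (Fin n) :=
  (WithLp.equiv 2 (Fin n → ℂ)).symm (ξ.mulVec (WithLp.equiv 2 (Fin n → ℂ) x))

/-- The real Frobenius inner product `⟪ξ,η⟫ = Re (tr (ξᴴ η))` on complex matrices. -/
def innK {n : ℕ} (ξ η : Matrix (Fin n) (Fin n) ℂ) : ℝ :=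
  (Matrix.trace (ξᴴ * η)).re

/-- The Frobenius norm induced by `innK`. -/
def normK {n : ℕ} (ξ : Matrix (Fin n) (Fin n) ℂ) : ℝ :=
  Real.sqrt (innK ξ ξ)

section Hilbert

variable {𝕜 E : Type*} [RCLike 𝕜] [NormedAddCommGroup E] [InnerProductSpace 𝕜 E] [CompleteSpace E]

theorem norm_apply_starProjection_le_of_reduces (K : Submodule 𝕜 E) [K.HasOrthogonalProjection]
    (T : E →L[𝕜] E) (hT : ∀ z ∈ K, T z ∈ K) (hT' : ∀ z ∈ K, star T z ∈ K) (x : E) :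
    ‖T (K.starProjection x)‖ ≤ ‖T x‖ := by
  have hperp : T (x - K.starProjection x) ∈ Kᗮ := fun z hz => by
    rw [← ContinuousLinearMap.adjoint_inner_left, ← ContinuousLinearMap.star_eq_adjoint]
    exact Submodule.inner_right_of_mem_orthogonal (hT' z hz) (K.sub_starProjection_mem_orthogonal x)
  have hpyth := norm_add_sq_eq_norm_sq_add_norm_sq_of_inner_eq_zero _ _
    (Submodule.inner_right_of_mem_orthogonal (hT _ (K.starProjection_apply_mem x)) hperp)
  rw [← map_add, add_sub_cancel] at hpyth
  exact (mul_self_le_mul_self_iff (norm_nonneg _) (norm_nonneg _)).2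
    (hpyth ▸ le_add_of_nonneg_right (mul_self_nonneg _))

theorem norm_apply_starProjection_ker_le {s w : E →L[𝕜] E}
    [(LinearMap.ker (s : E →ₗ[𝕜] E)).HasOrthogonalProjection] (hs : star s = -s) (hw : star w = -w)
    (hsw : Commute s w) (x : E) :
    ‖w ((LinearMap.ker (s : E →ₗ[𝕜] E)).starProjection x)‖ ≤ ‖(w + s) x‖ := by
  set K := LinearMap.ker (s : E →ₗ[𝕜] E)
  have hK : ∀ z ∈ K, (w + s) z ∈ K := fun z hz => by
    simp only [K, LinearMap.mem_ker, ContinuousLinearMap.coe_coe] at hz ⊢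
    rw [add_apply, hz, add_zero, show s (w z) = w (s z) from congr($(hsw.eq) z), hz, map_zero]
  have hstar : star (w + s) = -(w + s) := by rw [star_add, hs, hw, neg_add]
  have hPx : s (K.starProjection x) = 0 := K.starProjection_apply_mem x
  calc ‖w (K.starProjection x)‖ = ‖(w + s) (K.starProjection x)‖ := by
        rw [add_apply, hPx, add_zero]
    _ ≤ ‖(w + s) x‖ := norm_apply_starProjection_le_of_reduces K _ hK
        (fun z hz => by rw [hstar, neg_apply]; exact neg_mem (hK z hz)) x

end Hilbert

theorem mul_sub_le_norm_apply_of_norm_smul_sub_le {E F : Type*} [NormedAddCommGroup E]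
    [NormedSpace ℝ E] [NormedAddCommGroup F] [NormedSpace ℝ F] (L : E →ₗ[ℝ] F) {M ε : ℝ}
    (hL : ∀ v, ‖L v‖ ≤ M * ‖v‖) {x y : E} (hxy : ‖‖x‖⁻¹ • x - y‖ ≤ ε) (hM : 0 ≤ M) :
    ‖x‖ * (‖L y‖ - M * ε) ≤ ‖L x‖ := by
  rcases eq_or_ne x 0 with rfl | hx
  · simp
  have hx' : 0 < ‖x‖ := norm_pos_iff.2 hx
  have hunit : ‖L y‖ - M * ε ≤ ‖L (‖x‖⁻¹ • x)‖ := by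
    calc ‖L y‖ - M * ε ≤ ‖L y‖ - ‖L (y - ‖x‖⁻¹ • x)‖ := by
          gcongr
          exact (hL _).trans (by rw [norm_sub_rev]; gcongr)
      _ ≤ ‖L (‖x‖⁻¹ • x)‖ := by rw [map_sub]; linarith [norm_sub_norm_le (L y) (L (‖x‖⁻¹ • x))]
  calc ‖x‖ * (‖L y‖ - M * ε) ≤ ‖x‖ * ‖L (‖x‖⁻¹ • x)‖ := by gcongr
    _ = ‖L x‖ := by rw [map_smul, norm_smul, norm_inv, norm_norm, mul_inv_cancel_left₀ hx'.ne']

theorem exists_norm_le_mul_norm_apply_of_disjoint_ker {𝕜 E F : Type*} [NontriviallyNormedField 𝕜]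
    [CompleteSpace 𝕜] [NormedAddCommGroup E] [NormedSpace 𝕜 E] [FiniteDimensional 𝕜 E]
    [NormedAddCommGroup F] [NormedSpace 𝕜 F] (f : E →ₗ[𝕜] F) (S : Submodule 𝕜 E)
    (hf : Disjoint S (LinearMap.ker f)) : ∃ C > 0, ∀ v ∈ S, ‖v‖ ≤ C * ‖f v‖ := by
  obtain ⟨C, hC, hanti⟩ := (f.domRestrict S).exists_antilipschitzWith <|
    LinearMap.ker_eq_bot'.2 fun v hv => Subtype.ext (Submodule.disjoint_def.1 hf v v.2 hv)
  exact ⟨C, hC, fun v hv => ZeroHomClass.bound_of_antilipschitz _ hanti ⟨v, hv⟩⟩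

attribute [local instance] Matrix.frobeniusNormedAddCommGroup Matrix.frobeniusNormedSpace

namespace Matrix

variable {m n : Type*} [Fintype m] [Fintype n]

theorem frobenius_norm_mulVec_le {𝕜 : Type*} [RCLike 𝕜] (A : Matrix m n 𝕜) (v : n → 𝕜) :
    ‖WithLp.toLp 2 (A *ᵥ v)‖ ≤ ‖A‖ * ‖WithLp.toLp 2 v‖ := by
  rw [← frobenius_norm_replicateCol (ι := Unit), ← frobenius_norm_replicateCol (ι := Unit),
    replicateCol_mulVec]
  exact frobenius_norm_mul _ _

theorem re_trace_conjTranspose_mul_self (A : Matrix n n ℂ) : (Aᴴ * A).trace.re = ‖A‖ ^ 2 := by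
  have hnorm : ‖A‖ ^ 2 = ∑ i, ∑ j, ‖A i j‖ ^ 2 := by
    change ‖WithLp.toLp 2 fun i => WithLp.toLp 2 fun j => A i j‖ ^ 2 = _
    simp [PiLp.norm_sq_eq_of_L2]
  rw [hnorm, trace, Finset.sum_comm, Complex.re_sum]
  refine Finset.sum_congr rfl fun i _ => ?_
  simp only [diag, mul_apply, conjTranspose_apply, RCLike.star_def, RCLike.conj_mul, Complex.re_sum]
  norm_cast

end Matrix

section MulVecE

variable {n : ℕ}

lemma mulVecE_eq_toEuclideanCLM (A : Matrix (Fin n) (Fin n) ℂ) (x : EuclideanSpace ℂ (Fin n)) :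
    mulVecE A x = Matrix.toEuclideanCLM (𝕜 := ℂ) A x := rfl

lemma norm_mulVecE_le (A : Matrix (Fin n) (Fin n) ℂ) (x : EuclideanSpace ℂ (Fin n)) :
    ‖mulVecE A x‖ ≤ ‖A‖ * ‖x‖ :=
  Matrix.frobenius_norm_mulVec_le A x.ofLp

lemma mulVecE_add (A B : Matrix (Fin n) (Fin n) ℂ) (x : EuclideanSpace ℂ (Fin n)) :
    mulVecE (A + B) x = mulVecE A x + mulVecE B x := by
  simp only [mulVecE_eq_toEuclideanCLM, map_add, add_apply]

lemma mulVecE_smul (r : ℝ) (A : Matrix (Fin n) (Fin n) ℂ) (x : EuclideanSpace ℂ (Fin n)) :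
    mulVecE (r • A) x = r • mulVecE A x := by
  ext i
  simp [mulVecE, Matrix.smul_mulVec]

lemma innK_add_left (A B C : Matrix (Fin n) (Fin n) ℂ) :
    innK (A + B) C = innK A C + innK B C := by
  simp [innK, Matrix.conjTranspose_add, Matrix.add_mul]

lemma innK_smul_left (r : ℝ) (A C : Matrix (Fin n) (Fin n) ℂ) :
    innK (r • A) C = r * innK A C := by
  simp [innK, Matrix.conjTranspose_smul]

lemma innK_self (A : Matrix (Fin n) (Fin n) ℂ) : innK A A = ‖A‖ ^ 2 :=
  Matrix.re_trace_conjTranspose_mul_self A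

lemma normK_eq_norm (A : Matrix (Fin n) (Fin n) ℂ) : normK A = ‖A‖ := by
  rw [normK, innK_self, Real.sqrt_sq (norm_nonneg A)]

def stabOrthogonal (𝔨 : Submodule ℝ (Matrix (Fin n) (Fin n) ℂ)) (y : EuclideanSpace ℂ (Fin n)) :
    Submodule ℝ (Matrix (Fin n) (Fin n) ℂ) where
  carrier := {η | η ∈ 𝔨 ∧ ∀ ζ ∈ 𝔨, mulVecE ζ y = 0 → innK η ζ = 0}
  add_mem' := fun ⟨ha, ha'⟩ ⟨hb, hb'⟩ => ⟨𝔨.add_mem ha hb, fun ζ hζ h => by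
    rw [innK_add_left, ha' ζ hζ h, hb' ζ hζ h, add_zero]⟩
  zero_mem' := ⟨𝔨.zero_mem, fun ζ _ _ => by simp [innK]⟩
  smul_mem' := fun r _ ⟨hη, hη'⟩ => ⟨𝔨.smul_mem r hη, fun ζ hζ h => by
    rw [innK_smul_left, hη' ζ hζ h, mul_zero]⟩

def mulVecELinearLeft (y : EuclideanSpace ℂ (Fin n)) :
    Matrix (Fin n) (Fin n) ℂ →ₗ[ℝ] EuclideanSpace ℂ (Fin n) where
  toFun A := mulVecE A y
  map_add' A B := mulVecE_add A B y
  map_smul' r A := mulVecE_smul r A y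

theorem exists_norm_le_mul_norm_mulVecE (𝔨 : Submodule ℝ (Matrix (Fin n) (Fin n) ℂ))
    (y : EuclideanSpace ℂ (Fin n)) : ∃ C > 0, ∀ w ∈ stabOrthogonal 𝔨 y, ‖w‖ ≤ C * ‖mulVecE w y‖ :=
  exists_norm_le_mul_norm_apply_of_disjoint_ker (mulVecELinearLeft y) _ <|
    Submodule.disjoint_def.2 fun w ⟨hw, hw'⟩ hwy => by simpa [innK_self] using hw' w hw hwy

theorem mul_norm_le_norm_mulVecE_add {s w : Matrix (Fin n) (Fin n) ℂ} (hs : sᴴ = -s)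
    (hw : wᴴ = -w) (hsw : Commute s w) {x y : EuclideanSpace ℂ (Fin n)} (hsy : mulVecE s y = 0)
    {C ε : ℝ} (hC : 0 < C) (hwy : ‖w‖ ≤ C * ‖mulVecE w y‖) (hxy : ‖‖x‖⁻¹ • x - y‖ ≤ ε) :
    ‖x‖ * ‖w‖ * (C⁻¹ - ε) ≤ ‖mulVecE (w + s) x‖ := by
  set S := Matrix.toEuclideanCLM (n := Fin n) (𝕜 := ℂ) s
  set W := Matrix.toEuclideanCLM (n := Fin n) (𝕜 := ℂ) w
  set K := LinearMap.ker (S : EuclideanSpace ℂ (Fin n) →ₗ[ℂ] EuclideanSpace ℂ (Fin n))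
  let L : EuclideanSpace ℂ (Fin n) →ₗ[ℝ] EuclideanSpace ℂ (Fin n) :=
    ((W ∘L K.starProjection : EuclideanSpace ℂ (Fin n) →L[ℂ] EuclideanSpace ℂ (Fin n)) :
      EuclideanSpace ℂ (Fin n) →ₗ[ℂ] EuclideanSpace ℂ (Fin n)).restrictScalars ℝ
  have hL : ∀ v, ‖L v‖ ≤ ‖w‖ * ‖v‖ := fun v =>
    (norm_mulVecE_le w _).trans (by gcongr; exact K.norm_starProjection_apply_le v)
  have hLy : L y = mulVecE w y := congrArg (mulVecE w) (K.starProjection_eq_self_iff.2 hsy)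
  have hS : star S = -S := by rw [← map_star, ← map_neg]; exact congrArg _ hs
  have hW : star W = -W := by rw [← map_star, ← map_neg]; exact congrArg _ hw
  have hLx : ‖L x‖ ≤ ‖mulVecE (w + s) x‖ := by
    rw [mulVecE_eq_toEuclideanCLM, map_add]
    exact norm_apply_starProjection_ker_le hS hW (hsw.map _) x
  have hCy : C⁻¹ * ‖w‖ ≤ ‖L y‖ := by
    rw [hLy, inv_mul_le_iff₀ hC]; exact hwy
  calc ‖x‖ * ‖w‖ * (C⁻¹ - ε) = ‖x‖ * (C⁻¹ * ‖w‖ - ‖w‖ * ε) := by ring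
    _ ≤ ‖x‖ * (‖L y‖ - ‖w‖ * ε) := by gcongr
    _ ≤ ‖L x‖ := mul_sub_le_norm_apply_of_norm_smul_sub_le L hL hxy (norm_nonneg w)
    _ ≤ ‖mulVecE (w + s) x‖ := hLx

end MulVecE

theorem div_add_two_mul_norm_add_norm_le {E : Type*} [SeminormedAddCommGroup E] {c : ℝ}
    (hc : 0 < c) {u v : E} (huv : c * ‖u‖ ≤ ‖u + v‖) :
    c / (c + 2) * (‖u‖ + ‖v‖) ≤ ‖u + v‖ := by
  have hv : ‖v‖ ≤ ‖u + v‖ + ‖u‖ := by simpa using norm_sub_le (u + v) u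
  rw [div_mul_eq_mul_div, div_le_iff₀ (by positivity)]
  nlinarith

theorem stmt7_general (n : ℕ) (𝔨 : Submodule ℝ (Matrix (Fin n) (Fin n) ℂ))
    (hskew : ∀ ξ ∈ 𝔨, ξᴴ = -ξ)
    (habelian : ∀ ξ ∈ 𝔨, ∀ η ∈ 𝔨, ξ * η = η * ξ)
    (yh : EuclideanSpace ℂ (Fin n))
    (P : Matrix (Fin n) (Fin n) ℂ → Matrix (Fin n) (Fin n) ℂ)
    (hPmem : ∀ ξ ∈ 𝔨, P ξ ∈ 𝔨)
    -- `P ξ` is orthogonal to `stab(yh) = {η ∈ 𝔨 : η yh = 0}` ...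
    (hPperp : ∀ ξ ∈ 𝔨, ∀ η ∈ 𝔨, mulVecE η yh = 0 → innK (P ξ) η = 0)
    -- ... and `Q ξ = ξ - P ξ` lies in `stab(yh)`
    (hQstab : ∀ ξ ∈ 𝔨, mulVecE (ξ - P ξ) yh = 0) :
    ∃ U : Set (EuclideanSpace ℂ (Fin n)), IsOpen U ∧ yh ∈ U ∧
      ∃ c > (0:ℝ), ∃ c' > (0:ℝ), ∃ c'' > (0:ℝ),
        ∀ ξ ∈ 𝔨, ∀ x : EuclideanSpace ℂ (Fin n), x ≠ 0 → ‖x‖⁻¹ • x ∈ U →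
          ‖mulVecE ξ x‖ ≥ c * ‖x‖ * normK (P ξ) ∧
          ‖mulVecE ξ x‖ ≥ c' * ‖mulVecE (P ξ) x‖ ∧
          ‖mulVecE ξ x‖ ≥ c'' * (‖mulVecE (P ξ) x‖ + ‖mulVecE (ξ - P ξ) x‖) := by
  obtain ⟨C, hC, hCw⟩ := exists_norm_le_mul_norm_mulVecE 𝔨 yh
  set c := (2 * C)⁻¹
  have hc : 0 < c := by positivity
  refine ⟨Metric.ball yh c, Metric.isOpen_ball, Metric.mem_ball_self hc, c, hc, c, hc,
    c / (c + 2), by positivity, fun ξ hξ x _ hxU => ?_⟩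
  have hPξ := hPmem ξ hξ
  have hQξ := 𝔨.sub_mem hξ hPξ
  have hbound := mul_norm_le_norm_mulVecE_add (hskew _ hQξ) (hskew _ hPξ)
    (habelian _ hQξ _ hPξ) (hQstab ξ hξ) hC (hCw _ ⟨hPξ, hPperp ξ hξ⟩)
    (dist_eq_norm (‖x‖⁻¹ • x) yh ▸ (Metric.mem_ball.1 hxU).le)
  rw [add_sub_cancel, show C⁻¹ - c = c by simp only [c]; ring] at hbound
  have hP : c * ‖mulVecE (P ξ) x‖ ≤ ‖mulVecE ξ x‖ :=
    (mul_le_mul_of_nonneg_left (norm_mulVecE_le _ _) hc.le).trans (by linarith)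
  refine ⟨by rw [normK_eq_norm]; linarith, hP, ?_⟩
  have hsum : mulVecE (P ξ) x + mulVecE (ξ - P ξ) x = mulVecE ξ x := by
    rw [← mulVecE_add, add_sub_cancel]
  have hPQ := div_add_two_mul_norm_add_norm_le hc (hsum ▸ hP)
  rwa [hsum] at hPQ

/-- Key estimates near a point `yh` of the unit sphere:
`P` is the orthogonal projection of `𝔨` onto the orthogonal complement of `stab(yh)`
in `𝔨`, and `Q = id - P`. -/
theorem stmt7 (n : ℕ) (𝔨 : Submodule ℝ (Matrix (Fin n) (Fin n) ℂ))
    (hskew : ∀ ξ ∈ 𝔨, ξᴴ = -ξ)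
    (habelian : ∀ ξ ∈ 𝔨, ∀ η ∈ 𝔨, ξ * η = η * ξ)
    (yh : EuclideanSpace ℂ (Fin n)) (hyh : ‖yh‖ = 1)
    (P : Matrix (Fin n) (Fin n) ℂ → Matrix (Fin n) (Fin n) ℂ)
    (hPmem : ∀ ξ ∈ 𝔨, P ξ ∈ 𝔨)
    -- `P ξ` is orthogonal to `stab(yh) = {η ∈ 𝔨 : η yh = 0}` ...
    (hPperp : ∀ ξ ∈ 𝔨, ∀ η ∈ 𝔨, mulVecE η yh = 0 → innK (P ξ) η = 0)
    -- ... and `Q ξ = ξ - P ξ` lies in `stab(yh)`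
    (hQstab : ∀ ξ ∈ 𝔨, mulVecE (ξ - P ξ) yh = 0) :
    ∃ U : Set (EuclideanSpace ℂ (Fin n)), IsOpen U ∧ yh ∈ U ∧
      ∃ c > (0:ℝ), ∃ c' > (0:ℝ), ∃ c'' > (0:ℝ),
        ∀ ξ ∈ 𝔨, ∀ x : EuclideanSpace ℂ (Fin n), x ≠ 0 → ‖x‖⁻¹ • x ∈ U →
          ‖mulVecE ξ x‖ ≥ c * ‖x‖ * normK (P ξ) ∧
          ‖mulVecE ξ x‖ ≥ c' * ‖mulVecE (P ξ) x‖ ∧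
          ‖mulVecE ξ x‖ ≥ c'' * (‖mulVecE (P ξ) x‖ + ‖mulVecE (ξ - P ξ) x‖) :=
  stmt7_general n 𝔨 hskew habelian yh P hPmem hPperp hQstab
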